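/- arXiv:2210.04360 — 5 statements merged into one kernel-verified Lean document; each statement's English description precedes it below -/
import Mathlib

section
/- Let A be a Bernoulli(π) random variable and X a random vector independent of A with E(X)=0, and Y a square-integrable random variable. Let (α,β,γ,δ) minimize E[(Y − α − βA − γᵀX − A δᵀX)²] over all α,β ∈ ℝ and γ,δ ∈ ℝᵖ. Then β = E(Y | A=1) − E(Y | A=0). -/
/-!
Perturbing `(α, β)` along `(0, t)` and `(t, -t)` moves the residual `R` along `A` and `1 - A`,
so minimality forces the normal equations `E[R A] = 0` and `E[R (1 - A)] = 0`. Since `A` takes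
only the values `0` and `1`, multiplying by `A` (resp. `1 - A`) collapses the regressors to
`(α + β) A + A Xᵀ(γ + δ)` (resp. `α (1 - A) + (1 - A) Xᵀγ`), and the covariate terms vanish because
`A` is independent of the centred `X`. Hence `E[Y A] = (α + β) π` and `E[Y (1 - A)] = α (1 - π)`.
-/

open MeasureTheory ProbabilityTheory

section FirstOrderCondition

variable {Ω : Type*} [MeasurableSpace Ω] {μ : Measure Ω}

lemma integral_sub_mul_sq {R g : Ω → ℝ} (hR : MemLp R 2 μ) (hg : MemLp g 2 μ) (t : ℝ) :
    ∫ ω, (R ω - t * g ω) ^ 2 ∂μ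
      = ∫ ω, R ω ^ 2 ∂μ - 2 * t * ∫ ω, R ω * g ω ∂μ + t ^ 2 * ∫ ω, g ω ^ 2 ∂μ := by
  have hRg : Integrable (fun ω => 2 * t * (R ω * g ω)) μ := (hR.integrable_mul hg).const_mul _
  have hdiff : Integrable (fun ω => R ω ^ 2 - 2 * t * (R ω * g ω)) μ := hR.integrable_sq.sub hRg
  calc ∫ ω, (R ω - t * g ω) ^ 2 ∂μ
      = ∫ ω, (R ω ^ 2 - 2 * t * (R ω * g ω) + t ^ 2 * g ω ^ 2) ∂μ := by congr! 2 with ω; ring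
    _ = _ := by
      rw [integral_add hdiff (hg.integrable_sq.const_mul _),
        integral_sub hR.integrable_sq hRg, integral_const_mul, integral_const_mul]

lemma integral_mul_eq_zero_of_forall_integral_sq_le {R g : Ω → ℝ} (hR : MemLp R 2 μ)
    (hg : MemLp g 2 μ) (h : ∀ t : ℝ, ∫ ω, R ω ^ 2 ∂μ ≤ ∫ ω, (R ω - t * g ω) ^ 2 ∂μ) :
    ∫ ω, R ω * g ω ∂μ = 0 := by
  have hquad : ∀ t : ℝ,
      0 ≤ (∫ ω, g ω ^ 2 ∂μ) * (t * t) + (-2 * ∫ ω, R ω * g ω ∂μ) * t + 0 := fun t => by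
    linarith [h t, integral_sub_mul_sq hR hg t]
  have hdiscrim := discrim_le_zero hquad
  rw [discrim] at hdiscrim
  nlinarith

end FirstOrderCondition

section Regression

variable {Ω ι : Type*} [MeasurableSpace Ω] {μ : Measure Ω} [Fintype ι]
  {A Y : Ω → ℝ} {X : Ω → ι → ℝ}

lemma integral_mul_sum_eq_zero_of_indepFun {f : Ω → ℝ} (hfX : IndepFun f X μ)
    (hf : AEStronglyMeasurable f μ) (hX : ∀ j, Integrable (fun ω => X ω j) μ)
    (hXmean : ∀ j, ∫ ω, X ω j ∂μ = 0) (c : ι → ℝ) :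
    ∫ ω, f ω * ∑ j, c j * X ω j ∂μ = 0 := by
  have hlin : Measurable fun x : ι → ℝ => ∑ j, c j * x j := by fun_prop
  have hsum : Integrable (fun ω => ∑ j, c j * X ω j) μ :=
    integrable_finsetSum _ fun j _ => (hX j).const_mul (c j)
  have hprod := (hfX.comp measurable_id hlin).integral_mul_eq_mul_integral hf
    hsum.aestronglyMeasurable
  simp only [Function.comp_def, id, Pi.mul_apply] at hprod
  rw [hprod, integral_finsetSum _ fun j _ => (hX j).const_mul (c j)]
  simp [integral_const_mul, hXmean]

lemma memLp_mul_sum {p : ENNReal} {f : Ω → ℝ} (hf : MemLp f ⊤ μ)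
    (hX : ∀ j, MemLp (fun ω => X ω j) p μ) (c : ι → ℝ) :
    MemLp (fun ω => f ω * ∑ j, c j * X ω j) p μ :=
  (memLp_finsetSum _ fun j _ => (hX j).const_mul (c j)).mul' hf

lemma integral_residual_mul_treatment [IsFiniteMeasure μ] (hA01 : ∀ ω, A ω = 0 ∨ A ω = 1)
    (hA : MemLp A ⊤ μ) (hindep : IndepFun A X μ) (hY : MemLp Y 2 μ)
    (hX : ∀ j, MemLp (fun ω => X ω j) 2 μ) (hXmean : ∀ j, ∫ ω, X ω j ∂μ = 0) (α β : ℝ)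
    (γ δ : ι → ℝ) :
    ∫ ω, (Y ω - α - β * A ω - (∑ j, γ j * X ω j) - A ω * ∑ j, δ j * X ω j) * A ω ∂μ
      = ∫ ω, Y ω * A ω ∂μ - (α + β) * ∫ ω, A ω ∂μ := by
  have hXint j : Integrable (fun ω => X ω j) μ := (hX j).integrable one_le_two
  have hAX c := integral_mul_sum_eq_zero_of_indepFun hindep hA.1 hXint hXmean c
  have hAXint (c : ι → ℝ) : Integrable (fun ω => A ω * ∑ j, c j * X ω j) μ :=
    (memLp_mul_sum hA hX c).integrable one_le_two
  have hYA : Integrable (fun ω => Y ω * A ω) μ :=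
    hY.integrable_mul (q := 2) (hA.mono_exponent le_top)
  have hAint : Integrable (fun ω => (α + β) * A ω) μ := (hA.integrable le_top).const_mul _
  calc _ = ∫ ω, (Y ω * A ω - (α + β) * A ω - A ω * (∑ j, γ j * X ω j)
        - A ω * ∑ j, δ j * X ω j) ∂μ := by
        congr! 2 with ω
        rcases hA01 ω with h | h <;> simp only [h] <;> ring
    _ = _ := by
      rw [integral_sub (by fun_prop) (hAXint δ), integral_sub (by fun_prop) (hAXint γ),
        integral_sub hYA hAint, integral_const_mul, hAX, hAX]
      ring

lemma integral_residual_mul_control [IsProbabilityMeasure μ] (hA01 : ∀ ω, A ω = 0 ∨ A ω = 1)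
    (hA : MemLp A ⊤ μ) (hindep : IndepFun A X μ) (hY : MemLp Y 2 μ)
    (hX : ∀ j, MemLp (fun ω => X ω j) 2 μ) (hXmean : ∀ j, ∫ ω, X ω j ∂μ = 0) (α β : ℝ)
    (γ δ : ι → ℝ) :
    ∫ ω, (Y ω - α - β * A ω - (∑ j, γ j * X ω j) - A ω * ∑ j, δ j * X ω j) * (1 - A ω) ∂μ
      = ∫ ω, Y ω * (1 - A ω) ∂μ - α * (1 - ∫ ω, A ω ∂μ) := by
  have hB : MemLp (fun ω => 1 - A ω) ⊤ μ := (memLp_const 1).sub hA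
  have hBindep : IndepFun (fun ω => 1 - A ω) X μ :=
    hindep.comp (measurable_const.sub measurable_id) measurable_id
  have hBX := integral_mul_sum_eq_zero_of_indepFun hBindep hB.1
    (fun j => (hX j).integrable one_le_two) hXmean γ
  have hBXint : Integrable (fun ω => (1 - A ω) * ∑ j, γ j * X ω j) μ :=
    (memLp_mul_sum hB hX γ).integrable one_le_two
  have hYB : Integrable (fun ω => Y ω * (1 - A ω)) μ :=
    hY.integrable_mul (q := 2) (hB.mono_exponent le_top)
  have hBint : Integrable (fun ω => α * (1 - A ω)) μ := (hB.integrable le_top).const_mul _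
  calc _ = ∫ ω, (Y ω * (1 - A ω) - α * (1 - A ω) - (1 - A ω) * ∑ j, γ j * X ω j) ∂μ := by
        congr! 2 with ω
        rcases hA01 ω with h | h <;> simp only [h] <;> ring
    _ = _ := by
      rw [integral_sub (by fun_prop) hBXint, integral_sub hYB hBint, integral_const_mul,
        integral_sub (integrable_const 1) (hA.integrable le_top), integral_const]
      simp [hBX]

end Regression

/-- For a Bernoulli(π) treatment `A` independent of mean-zero covariates `X`,
the treatment coefficient `β` of the (unconstrained) population least squares fit of `Y` on
`(1, A, X, A·X)` equals the average treatment effect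
`E(Y | A = 1) - E(Y | A = 0) = E(YA)/π - E(Y(1-A))/(1-π)`. -/
theorem stmt_0 {Ω : Type*} [MeasurableSpace Ω] (μ : Measure Ω) [IsProbabilityMeasure μ]
    {p : ℕ} (π : ℝ) (hπ0 : 0 < π) (hπ1 : π < 1)
    (A Y : Ω → ℝ) (X : Ω → Fin p → ℝ)
    (hA01 : ∀ ω, A ω = 0 ∨ A ω = 1)
    (hAmean : ∫ ω, A ω ∂μ = π)
    (hindep : IndepFun A X μ)
    (hXmean : ∀ j, ∫ ω, X ω j ∂μ = 0)
    (hY : MemLp Y 2 μ) (hX : ∀ j, MemLp (fun ω => X ω j) 2 μ)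
    (α β : ℝ) (γ δ : Fin p → ℝ)
    (hmin : ∀ (α' β' : ℝ) (γ' δ' : Fin p → ℝ),
      ∫ ω, (Y ω - α - β * A ω - (∑ j, γ j * X ω j) - A ω * ∑ j, δ j * X ω j) ^ 2 ∂μ ≤
      ∫ ω, (Y ω - α' - β' * A ω - (∑ j, γ' j * X ω j) - A ω * ∑ j, δ' j * X ω j) ^ 2 ∂μ) :
    β = (∫ ω, Y ω * A ω ∂μ) / π - (∫ ω, Y ω * (1 - A ω) ∂μ) / (1 - π) := by
  have hA : MemLp A ⊤ μ := by
    refine memLp_top_of_bound (Integrable.of_integral_ne_zero ?_).1 1 (ae_of_all _ fun ω => ?_)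
    · rw [hAmean]; exact hπ0.ne'
    · rcases hA01 ω with h | h <;> simp [h]
  have hB : MemLp (fun ω => 1 - A ω) 2 μ := ((memLp_const 1).sub hA).mono_exponent le_top
  have hR : MemLp (fun ω => Y ω - α - β * A ω - (∑ j, γ j * X ω j) - A ω * ∑ j, δ j * X ω j)
      2 μ :=
    (((hY.sub (memLp_const α)).sub ((hA.mono_exponent le_top).const_mul β)).sub
      (memLp_finsetSum _ fun j _ => (hX j).const_mul (γ j))).sub (memLp_mul_sum hA hX δ)
  have htreat := integral_mul_eq_zero_of_forall_integral_sq_le hR (hA.mono_exponent le_top)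
    fun t => by convert hmin α (β + t) γ δ using 3; ring
  have hcontrol := integral_mul_eq_zero_of_forall_integral_sq_le hR hB
    fun t => by convert hmin (α + t) (β - t) γ δ using 3; ring
  rw [integral_residual_mul_treatment hA01 hA hindep hY hX hXmean, hAmean, sub_eq_zero] at htreat
  rw [integral_residual_mul_control hA01 hA hindep hY hX hXmean, hAmean, sub_eq_zero] at hcontrol
  rw [htreat, hcontrol, mul_div_cancel_right₀ _ hπ0.ne',
    mul_div_cancel_right₀ _ (sub_ne_zero.mpr hπ1.ne')]
  ring
end

section
/- Let A be Bernoulli(π), 0<π<1, independent of X with E(X)=0 and E(XXᵀ)=Σ. Let ε₁ be the residual from a constrained population least squares problem with constraint sets (Γ₁,Δ₁), and let ε₂ = ε₁ + (γ₁−γ₂)ᵀX + A(δ₁−δ₂)ᵀX be the residual for a nested problem (Γ₂,Δ₂) with Γ₂ ⊆ Γ₁ and Δ₂ ⊆ Δ₁. If either π = 1/2 or the unconstrained coordinate set of Δ₁ contains that of Γ₁, then E[(A−π)²ε₂²] ≥ E[(A−π)²ε₁²]. -/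
/-!
Write `ε₂ = ε₁ + h` with `h = (γ₁ - γ₂)ᵀX + A (δ₁ - δ₂)ᵀX` and weight `w = (A - π)²`. Then
`E[w ε₂²] = E[w ε₁²] + 2 E[w ε₁ h] + E[w h²]`, so it suffices that the cross term vanishes.
Since `A ∈ {0, 1}`, `w h = π² (γ₁ - γ₂)ᵀX + (1 - 2π) A (γ₁ - γ₂)ᵀX + (1 - π)² A (δ₁ - δ₂)ᵀX`,
and `E[w ε₁ h]` is a combination of the first-order conditions `E[ε₁ X_j] = 0` (`j ∈ UΓ₁`) and
`E[ε₁ A X_j] = 0` (`j ∈ UΔ₁`). The middle term is the only one that need not vanish; it is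
killed either by `1 - 2π = 0` or, when `UΓ₁ ⊆ UΔ₁`, by the conditions on `UΔ₁`.
-/

open MeasureTheory ProbabilityTheory
open scoped ENNReal

section

variable {Ω : Type*} [MeasurableSpace Ω] {μ : Measure Ω}

lemma integral_mul_sq_le_integral_mul_sq_add {w ε h : Ω → ℝ} (hw₀ : ∀ ω, 0 ≤ w ω)
    (hw : MemLp w ∞ μ) (hε : MemLp ε 2 μ) (hh : MemLp h 2 μ)
    (horth : ∫ ω, w ω * (ε ω * h ω) ∂μ = 0) :
    ∫ ω, w ω * ε ω ^ 2 ∂μ ≤ ∫ ω, w ω * (ε ω + h ω) ^ 2 ∂μ := by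
  have weighted {f g : Ω → ℝ} (hf : MemLp f 2 μ) (hg : MemLp g 2 μ) :
      Integrable (fun ω => w ω * (f ω * g ω)) μ :=
    (hf.integrable_mul hg).mul_of_top_right hw
  have hεε := weighted hε hε
  have hεh := weighted hε hh
  have hsum := weighted (hε.add hh) (hε.add hh)
  simp only [← sq] at hεε hsum
  calc ∫ ω, w ω * ε ω ^ 2 ∂μ = ∫ ω, (w ω * ε ω ^ 2 + 2 * (w ω * (ε ω * h ω))) ∂μ := by
        rw [integral_add hεε (hεh.const_mul 2), integral_const_mul, horth, mul_zero, add_zero]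
    _ ≤ ∫ ω, w ω * (ε ω + h ω) ^ 2 ∂μ :=
        integral_mono (hεε.add (hεh.const_mul 2)) hsum fun ω => by
          nlinarith [mul_nonneg (hw₀ ω) (sq_nonneg (h ω))]

lemma integral_mul_sum_eq_zero_of_orthogonal {ι : Type*} [Fintype ι] {ε : Ω → ℝ}
    {X : Ω → ι → ℝ} {c : ι → ℝ} {U : Set ι} (hint : ∀ j, Integrable (fun ω => ε ω * X ω j) μ)
    (horth : ∀ j ∈ U, ∫ ω, ε ω * X ω j ∂μ = 0) (hsupp : ∀ j ∉ U, c j = 0) :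
    ∫ ω, ε ω * ∑ j, c j * X ω j ∂μ = 0 := by
  have hterm (j : ι) : c j * ∫ ω, ε ω * X ω j ∂μ = 0 := by
    by_cases hj : j ∈ U
    · rw [horth j hj, mul_zero]
    · rw [hsupp j hj, zero_mul]
  simp_rw [Finset.mul_sum, mul_left_comm (ε _)]
  rw [integral_finsetSum _ fun j _ => (hint j).const_mul (c j)]
  simp_rw [integral_const_mul, hterm, Finset.sum_const_zero]

lemma integral_sq_sub_mul_mul_add {A ε g d : Ω → ℝ} (π : ℝ) (hA : ∀ ω, A ω = 0 ∨ A ω = 1)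
    (hg : Integrable (fun ω => ε ω * g ω) μ) (hAg : Integrable (fun ω => ε ω * A ω * g ω) μ)
    (hAd : Integrable (fun ω => ε ω * A ω * d ω) μ) :
    ∫ ω, (A ω - π) ^ 2 * (ε ω * (g ω + A ω * d ω)) ∂μ =
      π ^ 2 * ∫ ω, ε ω * g ω ∂μ + (1 - 2 * π) * ∫ ω, ε ω * A ω * g ω ∂μ
        + (1 - π) ^ 2 * ∫ ω, ε ω * A ω * d ω ∂μ := by
  have hpt (ω : Ω) : (A ω - π) ^ 2 * (ε ω * (g ω + A ω * d ω)) =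
      π ^ 2 * (ε ω * g ω) + (1 - 2 * π) * (ε ω * A ω * g ω)
        + (1 - π) ^ 2 * (ε ω * A ω * d ω) := by
    rcases hA ω with h | h <;> rw [h] <;> ring
  simp_rw [hpt]
  rw [integral_add, integral_add, integral_const_mul, integral_const_mul, integral_const_mul]
  exacts [hg.const_mul _, hAg.const_mul _, (hg.const_mul _).add (hAg.const_mul _),
    hAd.const_mul _]

end

theorem stmt_3_general {Ω : Type*} [MeasurableSpace Ω] (μ : Measure Ω)
    {p : ℕ} (π : ℝ) (hπ0 : 0 < π)
    (A : Ω → ℝ) (X : Ω → Fin p → ℝ)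
    (hA01 : ∀ ω, A ω = 0 ∨ A ω = 1)
    (hAmean : ∫ ω, A ω ∂μ = π)
    (UΓ₁ UΔ₁ : Set (Fin p))
    (γ₁ γ₂ δ₁ δ₂ : Fin p → ℝ) (ε₁ ε₂ : Ω → ℝ)
    (hε₁L2 : MemLp ε₁ 2 μ) (hXL2 : ∀ j, MemLp (fun ω => X ω j) 2 μ)
    (horthX : ∀ j ∈ UΓ₁, ∫ ω, ε₁ ω * X ω j ∂μ = 0)
    (horthAX : ∀ j ∈ UΔ₁, ∫ ω, ε₁ ω * A ω * X ω j ∂μ = 0)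
    (hsuppγ : ∀ j ∉ UΓ₁, γ₁ j - γ₂ j = 0)
    (hsuppδ : ∀ j ∉ UΔ₁, δ₁ j - δ₂ j = 0)
    (hε₂ : ∀ ω, ε₂ ω = ε₁ ω + (∑ j, (γ₁ j - γ₂ j) * X ω j)
        + A ω * ∑ j, (δ₁ j - δ₂ j) * X ω j)
    (hcond : π = 1 / 2 ∨ UΓ₁ ⊆ UΔ₁) :
    ∫ ω, (A ω - π) ^ 2 * ε₁ ω ^ 2 ∂μ ≤ ∫ ω, (A ω - π) ^ 2 * ε₂ ω ^ 2 ∂μ := by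
  -- `A` is measurable only because its integral `π` is not the junk value `0`.
  have hA : MemLp A ∞ μ := by
    have hAint : Integrable A μ := by
      by_contra h
      rw [integral_undef h] at hAmean
      linarith
    refine memLp_top_of_bound hAint.1 1 (ae_of_all _ fun ω => ?_)
    rcases hA01 ω with h | h <;> simp [h]
  have hw : MemLp (fun ω => (A ω - π) ^ 2) ∞ μ := by
    have hAπ := hA.sub (memLp_top_const π)
    simpa only [sq, Pi.sub_apply] using hAπ.mul' hAπ
  set g := fun ω => ∑ j, (γ₁ j - γ₂ j) * X ω j
  set d := fun ω => ∑ j, (δ₁ j - δ₂ j) * X ω j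
  have hg : MemLp g 2 μ := memLp_finsetSum _ fun j _ => (hXL2 j).const_mul _
  have hd : MemLp d 2 μ := memLp_finsetSum _ fun j _ => (hXL2 j).const_mul _
  have hε₁A : MemLp (fun ω => ε₁ ω * A ω) 2 μ := by
    simpa only [mul_comm] using hε₁L2.mul' hA
  have hXε₁ j := hε₁L2.integrable_mul (hXL2 j)
  have hXε₁A j := hε₁A.integrable_mul (hXL2 j)
  have hε₂' : ε₂ = fun ω => ε₁ ω + (g ω + A ω * d ω) :=
    funext fun ω => by rw [hε₂ ω, add_assoc]
  rw [hε₂']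
  refine integral_mul_sq_le_integral_mul_sq_add (fun ω => sq_nonneg _) hw hε₁L2
    (hg.add (by simpa only [mul_comm] using hd.mul' hA)) ?_
  rw [integral_sq_sub_mul_mul_add π hA01 (hε₁L2.integrable_mul hg) (hε₁A.integrable_mul hg)
      (hε₁A.integrable_mul hd),
    integral_mul_sum_eq_zero_of_orthogonal hXε₁ horthX hsuppγ,
    integral_mul_sum_eq_zero_of_orthogonal hXε₁A horthAX hsuppδ]
  rcases hcond with rfl | hΓΔ
  · ring
  · rw [integral_mul_sum_eq_zero_of_orthogonal hXε₁A horthAX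
      fun j hj => hsuppγ j (mt (@hΓΔ j) hj)]
    ring

/-- Theorem 1 of the paper: Let `A` be Bernoulli(π) independent of mean-zero `X`.
Let `ε₁` be the residual of the constrained least squares problem with constraint sets
`(Γ₁, Δ₁)` (encoded through its first-order orthogonality conditions on the unconstrained
coordinate sets `UΓ₁, UΔ₁`), and `ε₂ = ε₁ + (γ₁-γ₂)ᵀX + A(δ₁-δ₂)ᵀX` the residual of a nested
problem (`UΓ₂ ⊆ UΓ₁`, `UΔ₂ ⊆ UΔ₁`, with the coefficient differences supported on `UΓ₁`
resp. `UΔ₁`).  If `π = 1/2` or `UΓ₁ ⊆ UΔ₁`, then `E[(A-π)²ε₂²] ≥ E[(A-π)²ε₁²]`. -/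
theorem stmt_3 {Ω : Type*} [MeasurableSpace Ω] (μ : Measure Ω) [IsProbabilityMeasure μ]
    {p : ℕ} (π : ℝ) (hπ0 : 0 < π) (hπ1 : π < 1)
    (A : Ω → ℝ) (X : Ω → Fin p → ℝ)
    (hA01 : ∀ ω, A ω = 0 ∨ A ω = 1)
    (hAmean : ∫ ω, A ω ∂μ = π)
    (hindep : IndepFun A X μ)
    (hXmean : ∀ j, ∫ ω, X ω j ∂μ = 0)
    (UΓ₁ UΔ₁ UΓ₂ UΔ₂ : Set (Fin p)) (hΓnest : UΓ₂ ⊆ UΓ₁) (hΔnest : UΔ₂ ⊆ UΔ₁)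
    (γ₁ γ₂ δ₁ δ₂ : Fin p → ℝ) (ε₁ ε₂ : Ω → ℝ)
    (hε₁L2 : MemLp ε₁ 2 μ) (hXL2 : ∀ j, MemLp (fun ω => X ω j) 2 μ)
    (horth0 : ∫ ω, ε₁ ω ∂μ = 0)
    (horthA : ∫ ω, ε₁ ω * A ω ∂μ = 0)
    (horthX : ∀ j ∈ UΓ₁, ∫ ω, ε₁ ω * X ω j ∂μ = 0)
    (horthAX : ∀ j ∈ UΔ₁, ∫ ω, ε₁ ω * A ω * X ω j ∂μ = 0)
    (hsuppγ : ∀ j ∉ UΓ₁, γ₁ j - γ₂ j = 0)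
    (hsuppδ : ∀ j ∉ UΔ₁, δ₁ j - δ₂ j = 0)
    (hε₂ : ∀ ω, ε₂ ω = ε₁ ω + (∑ j, (γ₁ j - γ₂ j) * X ω j)
        + A ω * ∑ j, (δ₁ j - δ₂ j) * X ω j)
    (hcond : π = 1 / 2 ∨ UΓ₁ ⊆ UΔ₁) :
    ∫ ω, (A ω - π) ^ 2 * ε₁ ω ^ 2 ∂μ ≤ ∫ ω, (A ω - π) ^ 2 * ε₂ ω ^ 2 ∂μ :=
  stmt_3_general μ π hπ0 A X hA01 hAmean UΓ₁ UΔ₁ γ₁ γ₂ δ₁ δ₂ ε₁ ε₂ hε₁L2 hXL2 horthX horthAX hsuppγ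
    hsuppδ hε₂ hcond
end

section
/- Let A be Bernoulli(π) independent of X, and let ε₁ be a random variable with E(ε₁)=0, E(ε₁A)=0, E(ε₁ X_j)=0 for all j in a set U_Γ, and E(ε₁ A X_j)=0 for all j in a set U_Δ. For vectors d_γ supported on U_Γ and d_δ supported on U_Δ, E[(A−π)² ε₁ (d_γᵀX + A d_δᵀX)] = (1−2π) d_γᵀ E(ε₁ A X restricted to U_Γ), and this equals 0 if π = 1/2 or U_Δ ⊇ U_Γ. -/
open MeasureTheory ProbabilityTheory

/-!
Since `A² = A`, the weight `(A - π)²` equals `(1 - 2π) A + π²`. Expanding, the expectation becomes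
`(1 - 2π) E[ε₁ A d_γᵀX] + (1 - π)² E[ε₁ A d_δᵀX] + π² E[ε₁ d_γᵀX]`, and the orthogonality conditions
on the supports of `d_δ` and `d_γ` kill the last two terms. The first one vanishes when `π = 1/2`,
or when `U_Γ ⊆ U_Δ`, since then `E[ε₁ A X_j] = 0` on the support of `d_γ`.
-/

section WeightedSum

variable {ι Ω : Type*} [Fintype ι] [MeasurableSpace Ω] {μ : Measure Ω}
  {c : Ω → ℝ} {X : Ω → ι → ℝ}

lemma integrable_mul_weighted_sum (hX : ∀ j, Integrable (fun ω => c ω * X ω j) μ) (d : ι → ℝ) :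
    Integrable (fun ω => c ω * ∑ j, d j * X ω j) μ := by
  simp_rw [Finset.mul_sum, mul_left_comm (c _)]
  exact integrable_finsetSum _ fun j _ => (hX j).const_mul _

lemma integral_mul_weighted_sum (hX : ∀ j, Integrable (fun ω => c ω * X ω j) μ) (d : ι → ℝ) :
    ∫ ω, c ω * ∑ j, d j * X ω j ∂μ = ∑ j, d j * ∫ ω, c ω * X ω j ∂μ := by
  simp_rw [Finset.mul_sum, mul_left_comm (c _)]
  rw [integral_finsetSum _ fun j _ => (hX j).const_mul _]
  simp_rw [integral_const_mul]

end WeightedSum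

lemma Finset.sum_mul_eq_zero_of_vanish_off {ι : Type*} [Fintype ι] {U : Set ι} {d e : ι → ℝ}
    (hd : ∀ j ∉ U, d j = 0) (he : ∀ j ∈ U, e j = 0) : ∑ j, d j * e j = 0 :=
  Finset.sum_eq_zero fun j _ => by
    by_cases hj : j ∈ U
    · rw [he j hj, mul_zero]
    · rw [hd j hj, zero_mul]

lemma integral_sq_sub_mul_expand {ι Ω : Type*} [Fintype ι] [MeasurableSpace Ω] {μ : Measure Ω}
    (π : ℝ) {A ε : Ω → ℝ} {X : Ω → ι → ℝ} (hA01 : ∀ ω, A ω = 0 ∨ A ω = 1)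
    (hεX : ∀ j, Integrable (fun ω => ε ω * X ω j) μ)
    (hεAX : ∀ j, Integrable (fun ω => ε ω * A ω * X ω j) μ) (dγ dδ : ι → ℝ) :
    ∫ ω, (A ω - π) ^ 2 * (ε ω * ((∑ j, dγ j * X ω j) + A ω * ∑ j, dδ j * X ω j)) ∂μ
      = (1 - 2 * π) * (∑ j, dγ j * ∫ ω, ε ω * A ω * X ω j ∂μ)
        + (1 - π) ^ 2 * (∑ j, dδ j * ∫ ω, ε ω * A ω * X ω j ∂μ)
        + π ^ 2 * (∑ j, dγ j * ∫ ω, ε ω * X ω j ∂μ) := by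
  have expand : ∀ ω, (A ω - π) ^ 2 * (ε ω * ((∑ j, dγ j * X ω j) + A ω * ∑ j, dδ j * X ω j))
      = (1 - 2 * π) * (ε ω * A ω * ∑ j, dγ j * X ω j)
        + (1 - π) ^ 2 * (ε ω * A ω * ∑ j, dδ j * X ω j)
        + π ^ 2 * (ε ω * ∑ j, dγ j * X ω j) := fun ω => by
    rcases hA01 ω with h | h <;> rw [h] <;> ring
  have hγA := integrable_mul_weighted_sum hεAX dγ
  have hδA := integrable_mul_weighted_sum hεAX dδ
  have hγ := integrable_mul_weighted_sum hεX dγ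
  simp_rw [expand]
  rw [integral_add ?_ (hγ.const_mul _), integral_add (hγA.const_mul _) (hδA.const_mul _)]
  · simp only [integral_const_mul, integral_mul_weighted_sum hεAX, integral_mul_weighted_sum hεX]
  · exact (hγA.const_mul _).add (hδA.const_mul _)

theorem stmt_5_general {Ω : Type*} [MeasurableSpace Ω] (μ : Measure Ω)
    {p : ℕ} (π : ℝ)
    (A : Ω → ℝ) (X : Ω → Fin p → ℝ) (ε₁ : Ω → ℝ)
    (hA01 : ∀ ω, A ω = 0 ∨ A ω = 1)
    (UΓ UΔ : Set (Fin p)) (dγ dδ : Fin p → ℝ)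
    (hsuppγ : ∀ j ∉ UΓ, dγ j = 0) (hsuppδ : ∀ j ∉ UΔ, dδ j = 0)
    (horthX : ∀ j ∈ UΓ, ∫ ω, ε₁ ω * X ω j ∂μ = 0)
    (horthAX : ∀ j ∈ UΔ, ∫ ω, ε₁ ω * A ω * X ω j ∂μ = 0)
    (hint1 : ∀ j, Integrable (fun ω => ε₁ ω * X ω j) μ)
    (hint2 : ∀ j, Integrable (fun ω => ε₁ ω * A ω * X ω j) μ) :
    (∫ ω, (A ω - π) ^ 2 * (ε₁ ω * ((∑ j, dγ j * X ω j) + A ω * ∑ j, dδ j * X ω j)) ∂μ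
      = (1 - 2 * π) * ∑ j, dγ j * ∫ ω, ε₁ ω * A ω * X ω j ∂μ) ∧
    ((π = 1 / 2 ∨ UΓ ⊆ UΔ) →
      ∫ ω, (A ω - π) ^ 2 * (ε₁ ω * ((∑ j, dγ j * X ω j) + A ω * ∑ j, dδ j * X ω j)) ∂μ
        = 0) := by
  have main : ∫ ω, (A ω - π) ^ 2 * (ε₁ ω * ((∑ j, dγ j * X ω j) + A ω * ∑ j, dδ j * X ω j)) ∂μ
      = (1 - 2 * π) * ∑ j, dγ j * ∫ ω, ε₁ ω * A ω * X ω j ∂μ := by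
    rw [integral_sq_sub_mul_expand π hA01 hint1 hint2,
      Finset.sum_mul_eq_zero_of_vanish_off hsuppδ horthAX,
      Finset.sum_mul_eq_zero_of_vanish_off hsuppγ horthX]
    ring
  refine ⟨main, ?_⟩
  rintro (hhalf | hsub)
  · rw [main, hhalf]
    ring
  · rw [main, Finset.sum_mul_eq_zero_of_vanish_off hsuppγ fun j hj => horthAX j (hsub hj),
      mul_zero]

/-- If `ε₁` satisfies `E ε₁ = 0`, `E(ε₁A) = 0`, `E(ε₁X_j) = 0` for `j ∈ U_Γ`
and `E(ε₁AX_j) = 0` for `j ∈ U_Δ`, and `d_γ` is supported on `U_Γ`, `d_δ` on `U_Δ`, then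
`E[(A-π)² ε₁ (d_γᵀX + A d_δᵀX)] = (1-2π) ∑_j d_γ j · E(ε₁ A X_j)`, which is `0` when
`π = 1/2` or `U_Δ ⊇ U_Γ`. -/
theorem stmt_5 {Ω : Type*} [MeasurableSpace Ω] (μ : Measure Ω) [IsProbabilityMeasure μ]
    {p : ℕ} (π : ℝ) (hπ0 : 0 < π) (hπ1 : π < 1)
    (A : Ω → ℝ) (X : Ω → Fin p → ℝ) (ε₁ : Ω → ℝ)
    (hA01 : ∀ ω, A ω = 0 ∨ A ω = 1)
    (hAmean : ∫ ω, A ω ∂μ = π)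
    (hindep : IndepFun A X μ)
    (UΓ UΔ : Set (Fin p)) (dγ dδ : Fin p → ℝ)
    (hsuppγ : ∀ j ∉ UΓ, dγ j = 0) (hsuppδ : ∀ j ∉ UΔ, dδ j = 0)
    (horth0 : ∫ ω, ε₁ ω ∂μ = 0)
    (horthA : ∫ ω, ε₁ ω * A ω ∂μ = 0)
    (horthX : ∀ j ∈ UΓ, ∫ ω, ε₁ ω * X ω j ∂μ = 0)
    (horthAX : ∀ j ∈ UΔ, ∫ ω, ε₁ ω * A ω * X ω j ∂μ = 0)
    (hint1 : ∀ j, Integrable (fun ω => ε₁ ω * X ω j) μ)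
    (hint2 : ∀ j, Integrable (fun ω => ε₁ ω * A ω * X ω j) μ) :
    (∫ ω, (A ω - π) ^ 2 * (ε₁ ω * ((∑ j, dγ j * X ω j) + A ω * ∑ j, dδ j * X ω j)) ∂μ
      = (1 - 2 * π) * ∑ j, dγ j * ∫ ω, ε₁ ω * A ω * X ω j ∂μ) ∧
    ((π = 1 / 2 ∨ UΓ ⊆ UΔ) →
      ∫ ω, (A ω - π) ^ 2 * (ε₁ ω * ((∑ j, dγ j * X ω j) + A ω * ∑ j, dδ j * X ω j)) ∂μ
        = 0) :=
  stmt_5_general μ π A X ε₁ hA01 UΓ UΔ dγ dδ hsuppγ hsuppδ horthX horthAX hint1 hint2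
end

section
/- Consider nested constrained population least squares problems with Γ₁ ⊇ Γ₂, Δ₁ ⊇ Δ₂, and U(Γ₁) = U(Δ₁) (the unconstrained coordinate sets of Γ₁ and Δ₁ coincide). Let Vₖ = E[(A−π)²εₖ²]/(π²(1−π)²) and let the corrected variances be Ṽₖ = Vₖ + δₖᵀΣ(2δ_f − δₖ), where δ_f is the interaction coefficient of the fully unconstrained problem. Then Ṽ₂ − Ṽ₁ = (1/(π(1−π))) (d_γ + (1−π)d_δ)ᵀΣ(d_γ + (1−π)d_δ) ≥ 0, where d_γ = γ₁−γ₂, d_δ = δ₁−δ₂. -/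
open MeasureTheory ProbabilityTheory Matrix

/-!
Write `c = γ₁ - γ₂`, `d = δ₁ - δ₂`, so that `ε₂ = ε₁ + c ⬝ᵥ X + A (d ⬝ᵥ X)` with `c, d` supported
on `U`. The first-order conditions of the first fit kill the cross terms of `E[(A-π)²ε₂²]`, and
since `A` is a `{0,1}`-variable independent of `X`,
`E[(A-π)²(c ⬝ᵥ X + A (d ⬝ᵥ X))²] = π(1-π) Q(c + (1-π)d) + π²(1-π)² Q(d)` with `Q(v) = vᵀΣv`.
Comparing the first-order conditions of the full fit and of the first fit along a direction `v`
supported on `U` gives `(δf - δ₁)ᵀΣv = 0`; for `v = d` this turns the change of the correction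
term into `-Q(d)`, which cancels the second summand. Nonnegativity: `Q(v) = E[(v ⬝ᵥ X)²]`.
-/

section QuadraticForm

variable {ι : Type*} [Fintype ι] {S : Matrix ι ι ℝ}

theorem Matrix.IsSymm.dotProduct_mulVec_comm (hS : S.IsSymm) (u v : ι → ℝ) :
    u ⬝ᵥ S *ᵥ v = v ⬝ᵥ S *ᵥ u := by
  rw [dotProduct_mulVec, ← mulVec_transpose, hS.eq, dotProduct_comm]

theorem dotProduct_mulVec_two_smul_sub_sub_eq (hS : S.IsSymm) {δf δ₁ δ₂ : ι → ℝ}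
    (h : (δf - δ₁) ⬝ᵥ S *ᵥ (δ₁ - δ₂) = 0) :
    δ₂ ⬝ᵥ S *ᵥ ((2 : ℝ) • δf - δ₂) - δ₁ ⬝ᵥ S *ᵥ ((2 : ℝ) • δf - δ₁)
      = -((δ₁ - δ₂) ⬝ᵥ S *ᵥ (δ₁ - δ₂)) := by
  simp only [sub_dotProduct, dotProduct_sub, mulVec_sub, mulVec_smul, dotProduct_smul,
    smul_eq_mul] at h ⊢
  linear_combination -2 * h + 2 * hS.dotProduct_mulVec_comm δ₂ δf
    - 2 * hS.dotProduct_mulVec_comm δ₁ δf - hS.dotProduct_mulVec_comm δ₂ δ₁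

end QuadraticForm

section LinearForms

variable {Ω ι : Type*} [MeasurableSpace Ω] {μ : Measure Ω} [Fintype ι]

theorem integral_dotProduct {Y : Ω → ι → ℝ} (hY : ∀ j, Integrable (fun ω => Y ω j) μ)
    (u : ι → ℝ) : ∫ ω, u ⬝ᵥ Y ω ∂μ = u ⬝ᵥ fun j => ∫ ω, Y ω j ∂μ := by
  simp only [dotProduct]
  rw [integral_finsetSum _ fun j _ => (hY j).const_mul (u j)]
  simp only [integral_const_mul]

theorem integral_add_add {f g h : Ω → ℝ} (hf : Integrable f μ) (hg : Integrable g μ)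
    (hh : Integrable h μ) :
    ∫ ω, f ω + g ω + h ω ∂μ = ∫ ω, f ω ∂μ + ∫ ω, g ω ∂μ + ∫ ω, h ω ∂μ := by
  rw [← integral_add hf hg, ← integral_add (f := fun ω => f ω + g ω) (hf.add hg) hh]

theorem integral_mul_dotProduct_eq_zero {f : Ω → ℝ} {Y : Ω → ι → ℝ} {U : Set ι} {v : ι → ℝ}
    (hfY : ∀ j, Integrable (fun ω => f ω * Y ω j) μ)
    (horth : ∀ j ∈ U, ∫ ω, f ω * Y ω j ∂μ = 0) (hv : ∀ j ∉ U, v j = 0) :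
    ∫ ω, f ω * (v ⬝ᵥ Y ω) ∂μ = 0 := by
  have hpt : ∀ ω, f ω * (v ⬝ᵥ Y ω) = v ⬝ᵥ fun j => f ω * Y ω j := fun ω => by
    rw [dotProduct_comm, ← smul_eq_mul, ← smul_dotProduct, dotProduct_comm]; rfl
  rw [integral_congr_ae (ae_of_all _ hpt), integral_dotProduct hfY]
  refine Finset.sum_eq_zero fun j _ => ?_
  by_cases hj : j ∈ U
  · simp [horth j hj]
  · simp [hv j hj]

theorem memLp_dotProduct {X : Ω → ι → ℝ} {p : ENNReal} (hX : ∀ j, MemLp (fun ω => X ω j) p μ)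
    (u : ι → ℝ) : MemLp (fun ω => u ⬝ᵥ X ω) p μ :=
  memLp_finsetSum Finset.univ fun j _ => (hX j).const_mul (u j)

theorem integrable_mul_of_memLp_two {f g : Ω → ℝ} (hf : MemLp f 2 μ) (hg : MemLp g 2 μ) :
    Integrable (fun ω => f ω * g ω) μ :=
  hf.integrable_mul hg

theorem integral_dotProduct_mul_dotProduct {X : Ω → ι → ℝ} {S : Matrix ι ι ℝ}
    (hX : ∀ j, MemLp (fun ω => X ω j) 2 μ) (hS : ∀ j k, S j k = ∫ ω, X ω j * X ω k ∂μ)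
    (u v : ι → ℝ) : ∫ ω, (u ⬝ᵥ X ω) * (v ⬝ᵥ X ω) ∂μ = u ⬝ᵥ S *ᵥ v := by
  have hrow : ∀ j, ∫ ω, X ω j * (v ⬝ᵥ X ω) ∂μ = (S *ᵥ v) j := fun j => by
    have hpt : ∀ ω, X ω j * (v ⬝ᵥ X ω) = v ⬝ᵥ fun k => X ω j * X ω k := fun ω => by
      simp only [dotProduct, Finset.mul_sum]; exact Finset.sum_congr rfl fun k _ => by ring
    rw [integral_congr_ae (ae_of_all _ hpt),
      integral_dotProduct fun k => integrable_mul_of_memLp_two (hX j) (hX k), mulVec,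
      dotProduct_comm]
    simp only [← hS]
  have hpt : ∀ ω, (u ⬝ᵥ X ω) * (v ⬝ᵥ X ω) = u ⬝ᵥ fun j => X ω j * (v ⬝ᵥ X ω) := fun ω => by
    simp only [dotProduct, Finset.sum_mul]; exact Finset.sum_congr rfl fun k _ => by ring
  rw [integral_congr_ae (ae_of_all _ hpt),
    integral_dotProduct fun j => integrable_mul_of_memLp_two (hX j) (memLp_dotProduct hX v)]
  simp only [hrow]

end LinearForms

section Bernoulli

variable {Ω ι : Type*} [MeasurableSpace Ω] {μ : Measure Ω} [Fintype ι]
  {A : Ω → ℝ} {X : Ω → ι → ℝ} {S : Matrix ι ι ℝ}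

theorem memLp_mul_of_mem_zero_one (hA01 : ∀ ω, A ω = 0 ∨ A ω = 1)
    (hA : AEStronglyMeasurable A μ) {f : Ω → ℝ} {p : ENNReal} (hf : MemLp f p μ) :
    MemLp (fun ω => A ω * f ω) p μ :=
  hf.of_le (hA.mul hf.1) <| ae_of_all _ fun ω => by rcases hA01 ω with h | h <;> simp [h]

theorem integrable_mul_of_mem_zero_one (hA01 : ∀ ω, A ω = 0 ∨ A ω = 1)
    (hA : AEStronglyMeasurable A μ) {f : Ω → ℝ} (hf : Integrable f μ) :
    Integrable (fun ω => A ω * f ω) μ :=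
  memLp_one_iff_integrable.1 <| memLp_mul_of_mem_zero_one hA01 hA <| memLp_one_iff_integrable.2 hf

theorem integral_mul_dotProduct_eq_zero_of_normal_equations (hA01 : ∀ ω, A ω = 0 ∨ A ω = 1)
    (hA : AEStronglyMeasurable A μ) (hX : ∀ j, MemLp (fun ω => X ω j) 2 μ) {ε : Ω → ℝ}
    (hε : MemLp ε 2 μ) {U : Set ι} (hεX : ∀ j ∈ U, ∫ ω, ε ω * X ω j ∂μ = 0)
    (hεAX : ∀ j ∈ U, ∫ ω, ε ω * A ω * X ω j ∂μ = 0) {v : ι → ℝ} (hv : ∀ j ∉ U, v j = 0) :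
    ∫ ω, ε ω * (v ⬝ᵥ X ω) ∂μ = 0 ∧ ∫ ω, ε ω * A ω * (v ⬝ᵥ X ω) ∂μ = 0 := by
  have hint (j : ι) := integrable_mul_of_memLp_two hε (hX j)
  refine ⟨integral_mul_dotProduct_eq_zero hint hεX hv, integral_mul_dotProduct_eq_zero
    (fun j => ?_) hεAX hv⟩
  exact (integrable_mul_of_mem_zero_one hA01 hA (hint j)).congr (ae_of_all _ fun ω => by ring)

theorem integrable_sq_sub_mul_of_mem_zero_one (hA01 : ∀ ω, A ω = 0 ∨ A ω = 1)
    (hA : AEStronglyMeasurable A μ) {f : Ω → ℝ} (hf : Integrable f μ) (π : ℝ) :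
    Integrable (fun ω => (A ω - π) ^ 2 * f ω) μ :=
  (((integrable_mul_of_mem_zero_one hA01 hA hf).const_mul (1 - 2 * π)).add
    (hf.const_mul (π ^ 2))).congr <| ae_of_all _ fun ω => by
      rcases hA01 ω with h | h <;> simp only [Pi.add_apply, h] <;> ring

theorem integral_mul_dotProduct_mul_dotProduct_of_indepFun (hA : Integrable A μ)
    (hindep : IndepFun A X μ) (hX : ∀ j, MemLp (fun ω => X ω j) 2 μ)
    (hS : ∀ j k, S j k = ∫ ω, X ω j * X ω k ∂μ) (u v : ι → ℝ) :
    ∫ ω, A ω * ((u ⬝ᵥ X ω) * (v ⬝ᵥ X ω)) ∂μ = (∫ ω, A ω ∂μ) * (u ⬝ᵥ S *ᵥ v) := by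
  have hg : Measurable fun x : ι → ℝ => (u ⬝ᵥ x) * (v ⬝ᵥ x) := by
    simp only [dotProduct]; fun_prop
  rw [← integral_dotProduct_mul_dotProduct hX hS]
  exact (hindep.comp measurable_id hg).integral_mul_eq_mul_integral hA.aestronglyMeasurable
    (integrable_mul_of_memLp_two (memLp_dotProduct hX u)
      (memLp_dotProduct hX v)).aestronglyMeasurable

theorem dotProduct_mulVec_eq_zero_of_normal_equations {π : ℝ} (hπ0 : π ≠ 0) (hπ1 : π ≠ 1)
    (hA01 : ∀ ω, A ω = 0 ∨ A ω = 1) (hA : Integrable A μ) (hAmean : ∫ ω, A ω ∂μ = π)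
    (hindep : IndepFun A X μ) (hX : ∀ j, MemLp (fun ω => X ω j) 2 μ)
    (hS : ∀ j k, S j k = ∫ ω, X ω j * X ω k ∂μ) {εf ε : Ω → ℝ} (hεf : MemLp εf 2 μ)
    {a b v : ι → ℝ} (hε : ∀ ω, ε ω = εf ω + a ⬝ᵥ X ω + A ω * b ⬝ᵥ X ω)
    (hfv : ∫ ω, εf ω * (v ⬝ᵥ X ω) ∂μ = 0) (hfAv : ∫ ω, εf ω * A ω * (v ⬝ᵥ X ω) ∂μ = 0)
    (hv : ∫ ω, ε ω * (v ⬝ᵥ X ω) ∂μ = 0) (hAv : ∫ ω, ε ω * A ω * (v ⬝ᵥ X ω) ∂μ = 0) :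
    b ⬝ᵥ S *ᵥ v = 0 := by
  have hAm := hA.aestronglyMeasurable
  have hXv (u : ι → ℝ) : Integrable (fun ω => (u ⬝ᵥ X ω) * (v ⬝ᵥ X ω)) μ :=
    integrable_mul_of_memLp_two (memLp_dotProduct hX u) (memLp_dotProduct hX v)
  have hAXv (u : ι → ℝ) := integrable_mul_of_mem_zero_one hA01 hAm (hXv u)
  have hfX : Integrable (fun ω => εf ω * (v ⬝ᵥ X ω)) μ :=
    integrable_mul_of_memLp_two hεf (memLp_dotProduct hX v)
  have hfAX : Integrable (fun ω => εf ω * A ω * (v ⬝ᵥ X ω)) μ :=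
    (integrable_mul_of_mem_zero_one hA01 hAm hfX).congr (ae_of_all _ fun ω => by ring)
  have hQ := integral_dotProduct_mul_dotProduct hX hS (v := v)
  have hAQ := integral_mul_dotProduct_mul_dotProduct_of_indepFun hA hindep hX hS (v := v)
  have hv' : ∀ ω, ε ω * (v ⬝ᵥ X ω) = εf ω * (v ⬝ᵥ X ω) + (a ⬝ᵥ X ω) * (v ⬝ᵥ X ω)
      + A ω * ((b ⬝ᵥ X ω) * (v ⬝ᵥ X ω)) := fun ω => by rw [hε ω]; ring
  have hAv' : ∀ ω, ε ω * A ω * (v ⬝ᵥ X ω) = εf ω * A ω * (v ⬝ᵥ X ω)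
      + A ω * ((a ⬝ᵥ X ω) * (v ⬝ᵥ X ω)) + A ω * ((b ⬝ᵥ X ω) * (v ⬝ᵥ X ω)) := fun ω => by
    rcases hA01 ω with h | h <;> rw [hε ω, h] <;> ring
  rw [integral_congr_ae (ae_of_all _ hv'), integral_add_add hfX (hXv a) (hAXv b), hfv, hQ, hAQ,
    hAmean] at hv
  rw [integral_congr_ae (ae_of_all _ hAv'), integral_add_add hfAX (hAXv a) (hAXv b), hfAv, hAQ,
    hAQ, hAmean] at hAv
  have h : π * (1 - π) * (b ⬝ᵥ S *ᵥ v) = 0 := by linear_combination hAv - π * hv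
  simpa [hπ0, sub_eq_zero, Ne.symm hπ1] using h

theorem integral_sq_sub_mul_mul_eq_zero (hA01 : ∀ ω, A ω = 0 ∨ A ω = 1)
    (hA : AEStronglyMeasurable A μ) (hX : ∀ j, MemLp (fun ω => X ω j) 2 μ) {ε : Ω → ℝ}
    (hε : MemLp ε 2 μ) {c d : ι → ℝ} (hc : ∫ ω, ε ω * (c ⬝ᵥ X ω) ∂μ = 0)
    (hAc : ∫ ω, ε ω * A ω * (c ⬝ᵥ X ω) ∂μ = 0) (hAd : ∫ ω, ε ω * A ω * (d ⬝ᵥ X ω) ∂μ = 0)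
    (π : ℝ) : ∫ ω, (A ω - π) ^ 2 * (ε ω * (c ⬝ᵥ X ω + A ω * d ⬝ᵥ X ω)) ∂μ = 0 := by
  have hεX (u : ι → ℝ) : Integrable (fun ω => ε ω * (u ⬝ᵥ X ω)) μ :=
    integrable_mul_of_memLp_two hε (memLp_dotProduct hX u)
  have hεAX (u : ι → ℝ) : Integrable (fun ω => ε ω * A ω * (u ⬝ᵥ X ω)) μ :=
    (integrable_mul_of_mem_zero_one hA01 hA (hεX u)).congr (ae_of_all _ fun ω => by ring)
  have hpt : ∀ ω, (A ω - π) ^ 2 * (ε ω * (c ⬝ᵥ X ω + A ω * d ⬝ᵥ X ω))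
      = (1 - 2 * π) * (ε ω * A ω * (c ⬝ᵥ X ω)) + π ^ 2 * (ε ω * (c ⬝ᵥ X ω))
        + (1 - π) ^ 2 * (ε ω * A ω * (d ⬝ᵥ X ω)) := fun ω => by
    rcases hA01 ω with h | h <;> rw [h] <;> ring
  rw [integral_congr_ae (ae_of_all _ hpt), integral_add_add ((hεAX c).const_mul _)
    ((hεX c).const_mul _) ((hεAX d).const_mul _)]
  simp only [integral_const_mul, hc, hAc, hAd, mul_zero, add_zero]

theorem integral_sq_sub_mul_sq_dotProduct_add {π : ℝ} (hA01 : ∀ ω, A ω = 0 ∨ A ω = 1)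
    (hA : Integrable A μ) (hAmean : ∫ ω, A ω ∂μ = π) (hindep : IndepFun A X μ)
    (hX : ∀ j, MemLp (fun ω => X ω j) 2 μ) (hS : ∀ j k, S j k = ∫ ω, X ω j * X ω k ∂μ)
    (c d : ι → ℝ) :
    ∫ ω, (A ω - π) ^ 2 * (c ⬝ᵥ X ω + A ω * d ⬝ᵥ X ω) ^ 2 ∂μ
      = π * (1 - π) * ((c + (1 - π) • d) ⬝ᵥ S *ᵥ (c + (1 - π) • d))
        + (π * (1 - π)) ^ 2 * (d ⬝ᵥ S *ᵥ d) := by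
  have hXX (u : ι → ℝ) : Integrable (fun ω => (u ⬝ᵥ X ω) * (u ⬝ᵥ X ω)) μ :=
    integrable_mul_of_memLp_two (memLp_dotProduct hX u) (memLp_dotProduct hX u)
  have hAXX (u : ι → ℝ) :=
    integrable_mul_of_mem_zero_one hA01 hA.aestronglyMeasurable (hXX u)
  have hpt : ∀ ω, (A ω - π) ^ 2 * (c ⬝ᵥ X ω + A ω * d ⬝ᵥ X ω) ^ 2
      = π ^ 2 * ((c ⬝ᵥ X ω) * (c ⬝ᵥ X ω))
        + (1 - π) ^ 2 * (A ω * (((c + d) ⬝ᵥ X ω) * ((c + d) ⬝ᵥ X ω)))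
        + -π ^ 2 * (A ω * ((c ⬝ᵥ X ω) * (c ⬝ᵥ X ω))) := fun ω => by
    -- on `{A = 1}` both sides are `(1-π)² ((c+d) ⬝ᵥ X)²`, on `{A = 0}` both are `π² (c ⬝ᵥ X)²`
    rcases hA01 ω with h | h <;> rw [h, add_dotProduct] <;> ring
  rw [integral_congr_ae (ae_of_all _ hpt), integral_add_add ((hXX c).const_mul _)
    ((hAXX (c + d)).const_mul _) ((hAXX c).const_mul _)]
  simp only [integral_const_mul, integral_dotProduct_mul_dotProduct hX hS,
    integral_mul_dotProduct_mul_dotProduct_of_indepFun hA hindep hX hS, hAmean]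
  simp only [add_dotProduct, dotProduct_add, mulVec_add, smul_dotProduct, dotProduct_smul,
    mulVec_smul, smul_eq_mul]
  ring

theorem integral_sq_sub_mul_sq_add {π : ℝ} (hA01 : ∀ ω, A ω = 0 ∨ A ω = 1)
    (hA : Integrable A μ) (hAmean : ∫ ω, A ω ∂μ = π) (hindep : IndepFun A X μ)
    (hX : ∀ j, MemLp (fun ω => X ω j) 2 μ) (hS : ∀ j k, S j k = ∫ ω, X ω j * X ω k ∂μ)
    {ε : Ω → ℝ} (hε : MemLp ε 2 μ) {c d : ι → ℝ} (hc : ∫ ω, ε ω * (c ⬝ᵥ X ω) ∂μ = 0)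
    (hAc : ∫ ω, ε ω * A ω * (c ⬝ᵥ X ω) ∂μ = 0) (hAd : ∫ ω, ε ω * A ω * (d ⬝ᵥ X ω) ∂μ = 0) :
    ∫ ω, (A ω - π) ^ 2 * (ε ω + c ⬝ᵥ X ω + A ω * d ⬝ᵥ X ω) ^ 2 ∂μ
      = ∫ ω, (A ω - π) ^ 2 * ε ω ^ 2 ∂μ
        + π * (1 - π) * ((c + (1 - π) • d) ⬝ᵥ S *ᵥ (c + (1 - π) • d))
        + (π * (1 - π)) ^ 2 * (d ⬝ᵥ S *ᵥ d) := by
  have hAm := hA.aestronglyMeasurable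
  have hL : MemLp (fun ω => c ⬝ᵥ X ω + A ω * d ⬝ᵥ X ω) 2 μ :=
    (memLp_dotProduct hX c).add (memLp_mul_of_mem_zero_one hA01 hAm (memLp_dotProduct hX d))
  have hpt : ∀ ω, (A ω - π) ^ 2 * (ε ω + c ⬝ᵥ X ω + A ω * d ⬝ᵥ X ω) ^ 2
      = (A ω - π) ^ 2 * ε ω ^ 2
        + 2 * ((A ω - π) ^ 2 * (ε ω * (c ⬝ᵥ X ω + A ω * d ⬝ᵥ X ω)))
        + (A ω - π) ^ 2 * (c ⬝ᵥ X ω + A ω * d ⬝ᵥ X ω) ^ 2 := fun ω => by ring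
  rw [integral_congr_ae (ae_of_all _ hpt), integral_add_add
    (integrable_sq_sub_mul_of_mem_zero_one hA01 hAm hε.integrable_sq π)
    ((integrable_sq_sub_mul_of_mem_zero_one hA01 hAm
      (integrable_mul_of_memLp_two hε hL) π).const_mul 2)
    (integrable_sq_sub_mul_of_mem_zero_one hA01 hAm hL.integrable_sq π), integral_const_mul,
    integral_sq_sub_mul_mul_eq_zero hA01 hAm hX hε hc hAc hAd,
    integral_sq_sub_mul_sq_dotProduct_add hA01 hA hAmean hindep hX hS]
  ring

end Bernoulli

theorem stmt_8_general {Ω : Type*} [MeasurableSpace Ω] (μ : Measure Ω)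
    {p : ℕ} (π : ℝ) (hπ0 : 0 < π) (hπ1 : π < 1)
    (A : Ω → ℝ) (X : Ω → Fin p → ℝ)
    (hA01 : ∀ ω, A ω = 0 ∨ A ω = 1)
    (hAmean : ∫ ω, A ω ∂μ = π)
    (hindep : IndepFun A X μ)
    (hXL2 : ∀ j, MemLp (fun ω => X ω j) 2 μ)
    (S : Matrix (Fin p) (Fin p) ℝ)
    (hS : ∀ j k, S j k = ∫ ω, X ω j * X ω k ∂μ)
    -- the common unconstrained coordinate set U = U(Γ₁) = U(Δ₁)
    (U : Set (Fin p))
    (γf δf γ₁ γ₂ δ₁ δ₂ : Fin p → ℝ) (εf ε₁ ε₂ : Ω → ℝ)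
    (hεfL2 : MemLp εf 2 μ) (hε₁L2 : MemLp ε₁ 2 μ)
    -- first-order conditions of the fully unconstrained fit
    (hfX : ∀ j, ∫ ω, εf ω * X ω j ∂μ = 0)
    (hfAX : ∀ j, ∫ ω, εf ω * A ω * X ω j ∂μ = 0)
    -- first-order conditions of the first constrained fit
    (h1X : ∀ j ∈ U, ∫ ω, ε₁ ω * X ω j ∂μ = 0)
    (h1AX : ∀ j ∈ U, ∫ ω, ε₁ ω * A ω * X ω j ∂μ = 0)
    -- residual relationships
    (hε₁ : ∀ ω, ε₁ ω = εf ω + (∑ j, (γf j - γ₁ j) * X ω j)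
        + A ω * ∑ j, (δf j - δ₁ j) * X ω j)
    (hε₂ : ∀ ω, ε₂ ω = ε₁ ω + (∑ j, (γ₁ j - γ₂ j) * X ω j)
        + A ω * ∑ j, (δ₁ j - δ₂ j) * X ω j)
    -- nesting: the coefficient differences are supported on U
    (hsuppγ : ∀ j ∉ U, γ₁ j = γ₂ j) (hsuppδ : ∀ j ∉ U, δ₁ j = δ₂ j) :
    ((∫ ω, (A ω - π) ^ 2 * ε₂ ω ^ 2 ∂μ) / (π ^ 2 * (1 - π) ^ 2)
        + δ₂ ⬝ᵥ (S *ᵥ ((2 : ℝ) • δf - δ₂)))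
      - ((∫ ω, (A ω - π) ^ 2 * ε₁ ω ^ 2 ∂μ) / (π ^ 2 * (1 - π) ^ 2)
        + δ₁ ⬝ᵥ (S *ᵥ ((2 : ℝ) • δf - δ₁)))
      = (1 / (π * (1 - π))) *
        (((γ₁ - γ₂) + (1 - π) • (δ₁ - δ₂)) ⬝ᵥ (S *ᵥ ((γ₁ - γ₂) + (1 - π) • (δ₁ - δ₂)))) ∧
    ((∫ ω, (A ω - π) ^ 2 * ε₁ ω ^ 2 ∂μ) / (π ^ 2 * (1 - π) ^ 2)
        + δ₁ ⬝ᵥ (S *ᵥ ((2 : ℝ) • δf - δ₁)))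
      ≤ ((∫ ω, (A ω - π) ^ 2 * ε₂ ω ^ 2 ∂μ) / (π ^ 2 * (1 - π) ^ 2)
        + δ₂ ⬝ᵥ (S *ᵥ ((2 : ℝ) • δf - δ₂))) := by
  have hA : Integrable A μ := .of_integral_ne_zero (hAmean ▸ hπ0.ne')
  have hSsymm : S.IsSymm := IsSymm.ext fun j k => by simp only [hS, mul_comm]
  have hε₁' : ∀ ω, ε₁ ω = εf ω + (γf - γ₁) ⬝ᵥ X ω + A ω * (δf - δ₁) ⬝ᵥ X ω := hε₁
  have hε₂' : ∀ ω, ε₂ ω = ε₁ ω + (γ₁ - γ₂) ⬝ᵥ X ω + A ω * (δ₁ - δ₂) ⬝ᵥ X ω := hε₂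
  have horth_f (v : Fin p → ℝ) := integral_mul_dotProduct_eq_zero_of_normal_equations hA01
    hA.aestronglyMeasurable hXL2 hεfL2 (U := Set.univ) (v := v) (fun j _ => hfX j)
    (fun j _ => hfAX j) (by simp)
  have horth₁ {v : Fin p → ℝ} (hv : ∀ j ∉ U, v j = 0) :=
    integral_mul_dotProduct_eq_zero_of_normal_equations hA01 hA.aestronglyMeasurable hXL2 hε₁L2
      h1X h1AX hv
  have hc : ∀ j ∉ U, (γ₁ - γ₂) j = 0 := fun j hj => sub_eq_zero.2 (hsuppγ j hj)
  have hd : ∀ j ∉ U, (δ₁ - δ₂) j = 0 := fun j hj => sub_eq_zero.2 (hsuppδ j hj)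
  have hbd : (δf - δ₁) ⬝ᵥ S *ᵥ (δ₁ - δ₂) = 0 :=
    dotProduct_mulVec_eq_zero_of_normal_equations hπ0.ne' hπ1.ne hA01 hA hAmean hindep hXL2 hS
      hεfL2 hε₁' (horth_f _).1 (horth_f _).2 (horth₁ hd).1 (horth₁ hd).2
  have hvar : ∫ ω, (A ω - π) ^ 2 * ε₂ ω ^ 2 ∂μ = ∫ ω, (A ω - π) ^ 2 * ε₁ ω ^ 2 ∂μ
      + π * (1 - π) * (((γ₁ - γ₂) + (1 - π) • (δ₁ - δ₂)) ⬝ᵥ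
          S *ᵥ ((γ₁ - γ₂) + (1 - π) • (δ₁ - δ₂)))
      + (π * (1 - π)) ^ 2 * ((δ₁ - δ₂) ⬝ᵥ S *ᵥ (δ₁ - δ₂)) := by
    simp only [hε₂']
    exact integral_sq_sub_mul_sq_add hA01 hA hAmean hindep hXL2 hS hε₁L2 (horth₁ hc).1
      (horth₁ hc).2 (horth₁ hd).2
  have hcorr := dotProduct_mulVec_two_smul_sub_sub_eq hSsymm hbd
  have hQ : 0 ≤ ((γ₁ - γ₂) + (1 - π) • (δ₁ - δ₂)) ⬝ᵥ S *ᵥ ((γ₁ - γ₂) + (1 - π) • (δ₁ - δ₂)) :=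
    integral_dotProduct_mul_dotProduct hXL2 hS _ _ ▸ integral_nonneg fun ω => mul_self_nonneg _
  refine (fun hgap => ⟨hgap, sub_nonneg.1 (hgap ▸ mul_nonneg (by positivity) hQ)⟩) ?_
  have hπ1' : 1 - π ≠ 0 := sub_ne_zero.2 hπ1.ne'
  rw [hvar]
  field_simp
  linear_combination (π * (1 - π)) ^ 2 * hcorr

/-- Theorem 2 of the paper: nested constrained population least squares
problems with `Γ₁ ⊇ Γ₂`, `Δ₁ ⊇ Δ₂` and `U(Γ₁) = U(Δ₁) = U`.  `ε_f` is the residual of the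
fully unconstrained fit (interaction coefficient `δf`), `ε₁, ε₂` the residuals of the two
constrained fits with coefficients `(γ₁,δ₁)`, `(γ₂,δ₂)`; orthogonality (first-order)
conditions are recorded as hypotheses.  With `Vₖ = E[(A-π)²εₖ²]/(π²(1-π)²)` and corrected
variances `Ṽₖ = Vₖ + δₖᵀΣ(2δf - δₖ)`, one has
`Ṽ₂ - Ṽ₁ = (1/(π(1-π))) (d_γ + (1-π)d_δ)ᵀΣ(d_γ + (1-π)d_δ) ≥ 0`
where `d_γ = γ₁ - γ₂`, `d_δ = δ₁ - δ₂`. -/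
theorem stmt_8 {Ω : Type*} [MeasurableSpace Ω] (μ : Measure Ω) [IsProbabilityMeasure μ]
    {p : ℕ} (π : ℝ) (hπ0 : 0 < π) (hπ1 : π < 1)
    (A : Ω → ℝ) (X : Ω → Fin p → ℝ)
    (hA01 : ∀ ω, A ω = 0 ∨ A ω = 1)
    (hAmean : ∫ ω, A ω ∂μ = π)
    (hindep : IndepFun A X μ)
    (hXmean : ∀ j, ∫ ω, X ω j ∂μ = 0)
    (hXL2 : ∀ j, MemLp (fun ω => X ω j) 2 μ)
    (S : Matrix (Fin p) (Fin p) ℝ)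
    (hS : ∀ j k, S j k = ∫ ω, X ω j * X ω k ∂μ) (hSpd : S.PosDef)
    -- the common unconstrained coordinate set U = U(Γ₁) = U(Δ₁)
    (U : Set (Fin p))
    (γf δf γ₁ γ₂ δ₁ δ₂ : Fin p → ℝ) (εf ε₁ ε₂ : Ω → ℝ)
    (hεfL2 : MemLp εf 2 μ) (hε₁L2 : MemLp ε₁ 2 μ)
    -- first-order conditions of the fully unconstrained fit
    (hf0 : ∫ ω, εf ω ∂μ = 0) (hfA : ∫ ω, εf ω * A ω ∂μ = 0)
    (hfX : ∀ j, ∫ ω, εf ω * X ω j ∂μ = 0)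
    (hfAX : ∀ j, ∫ ω, εf ω * A ω * X ω j ∂μ = 0)
    -- first-order conditions of the first constrained fit
    (h10 : ∫ ω, ε₁ ω ∂μ = 0) (h1A : ∫ ω, ε₁ ω * A ω ∂μ = 0)
    (h1X : ∀ j ∈ U, ∫ ω, ε₁ ω * X ω j ∂μ = 0)
    (h1AX : ∀ j ∈ U, ∫ ω, ε₁ ω * A ω * X ω j ∂μ = 0)
    -- residual relationships
    (hε₁ : ∀ ω, ε₁ ω = εf ω + (∑ j, (γf j - γ₁ j) * X ω j)
        + A ω * ∑ j, (δf j - δ₁ j) * X ω j)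
    (hε₂ : ∀ ω, ε₂ ω = ε₁ ω + (∑ j, (γ₁ j - γ₂ j) * X ω j)
        + A ω * ∑ j, (δ₁ j - δ₂ j) * X ω j)
    -- nesting: the coefficient differences are supported on U
    (hsuppγ : ∀ j ∉ U, γ₁ j = γ₂ j) (hsuppδ : ∀ j ∉ U, δ₁ j = δ₂ j) :
    ((∫ ω, (A ω - π) ^ 2 * ε₂ ω ^ 2 ∂μ) / (π ^ 2 * (1 - π) ^ 2)
        + δ₂ ⬝ᵥ (S *ᵥ ((2 : ℝ) • δf - δ₂)))
      - ((∫ ω, (A ω - π) ^ 2 * ε₁ ω ^ 2 ∂μ) / (π ^ 2 * (1 - π) ^ 2)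
        + δ₁ ⬝ᵥ (S *ᵥ ((2 : ℝ) • δf - δ₁)))
      = (1 / (π * (1 - π))) *
        (((γ₁ - γ₂) + (1 - π) • (δ₁ - δ₂)) ⬝ᵥ (S *ᵥ ((γ₁ - γ₂) + (1 - π) • (δ₁ - δ₂)))) ∧
    ((∫ ω, (A ω - π) ^ 2 * ε₁ ω ^ 2 ∂μ) / (π ^ 2 * (1 - π) ^ 2)
        + δ₁ ⬝ᵥ (S *ᵥ ((2 : ℝ) • δf - δ₁)))
      ≤ ((∫ ω, (A ω - π) ^ 2 * ε₂ ω ^ 2 ∂μ) / (π ^ 2 * (1 - π) ^ 2)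
        + δ₂ ⬝ᵥ (S *ᵥ ((2 : ℝ) • δf - δ₂))) :=
  stmt_8_general μ π hπ0 hπ1 A X hA01 hAmean hindep hXL2 S hS U γf δf γ₁ γ₂ δ₁ δ₂ εf ε₁ ε₂ hεfL2
    hε₁L2 hfX hfAX h1X h1AX hε₁ hε₂ hsuppγ hsuppδ
end

section
/- Let A be Bernoulli(π) independent of X, E(X)=0, Σ positive definite, and let Ω₁ = E(XY|A=1), Ω₀ = E(XY|A=0) with Ω₀ = −(1/2)Ω₁ and Ω₁ ≠ 0. Then with δ_f = Σ⁻¹(Ω₁ − Ω₀), γ_f = Σ⁻¹Ω₀, δ₁ = δ_f + γ_f, the quantity Ṽ₁ − Ṽ₂ = E[(γ_fᵀX + δ_fᵀX)²]/π + (δ_f+γ_f)ᵀΣ(δ_f−γ_f) equals (1+2π)Ω₁ᵀΣ⁻¹Ω₁/π > 0. That is, the empirically-centred interaction-only estimator can have strictly larger asymptotic variance than ANOVA. -/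
/-!
Under `Ω₀ = -Ω₁/2` the coefficient vectors combine to `δ_f + γ_f = Σ⁻¹Ω₁` and
`δ_f - γ_f = 2 Σ⁻¹Ω₁`. Since `Σ` is the second-moment matrix of `X`, the mean-square term is the
quadratic form `Ω₁ᵀΣ⁻¹Ω₁` and the cross term is twice it, which gives the identity; positivity
follows because `Σ⁻¹` is positive definite and `Ω₁ ≠ 0`.
-/

open MeasureTheory ProbabilityTheory Matrix

section SecondMoment

variable {Ω ι : Type*} [MeasurableSpace Ω] {μ : Measure Ω} [Fintype ι]

theorem integral_sq_sum_mul_eq_dotProduct_mulVec {X : Ω → ι → ℝ}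
    (hX : ∀ j, MemLp (fun ω => X ω j) 2 μ) {S : Matrix ι ι ℝ}
    (hS : ∀ j k, S j k = ∫ ω, X ω j * X ω k ∂μ) (v : ι → ℝ) :
    ∫ ω, (∑ j, v j * X ω j) ^ 2 ∂μ = v ⬝ᵥ (S *ᵥ v) := by
  have hint : ∀ j k, Integrable (fun ω => v j * v k * (X ω j * X ω k)) μ := fun j k =>
    ((hX j).integrable_mul (hX k)).const_mul _
  have hexpand : ∀ ω, (∑ j, v j * X ω j) ^ 2 = ∑ j, ∑ k, v j * v k * (X ω j * X ω k) := by
    intro ω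
    rw [sq, Finset.sum_mul_sum]
    exact Finset.sum_congr rfl fun j _ => Finset.sum_congr rfl fun k _ => by ring
  simp_rw [hexpand]
  rw [integral_finsetSum _ fun j _ => integrable_finsetSum _ fun k _ => hint j k]
  simp_rw [integral_finsetSum _ fun k _ => hint _ k, integral_const_mul, ← hS]
  simp only [dotProduct, mulVec, Finset.mul_sum]
  exact Finset.sum_congr rfl fun j _ => Finset.sum_congr rfl fun k _ => by ring

end SecondMoment

theorem Matrix.mulVec_nonsing_inv_mulVec {n α : Type*} [Fintype n] [DecidableEq n] [CommRing α]
    {S : Matrix n n α} (hS : IsUnit S.det) (w : n → α) : S *ᵥ (S⁻¹ *ᵥ w) = w := by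
  rw [mulVec_mulVec, mul_nonsing_inv S hS, one_mulVec]

theorem stmt_14_general {Ωs : Type*} [MeasurableSpace Ωs] (μ : Measure Ωs)
    {p : ℕ} (π : ℝ) (hπ0 : 0 < π)
    (X : Ωs → Fin p → ℝ)
    (hXL2 : ∀ j, MemLp (fun ω => X ω j) 2 μ)
    (S : Matrix (Fin p) (Fin p) ℝ)
    (hS : ∀ j k, S j k = ∫ ω, X ω j * X ω k ∂μ) (hSpd : S.PosDef)
    (Ω₁ Ω₀ γf δf : Fin p → ℝ)
    (hrel : Ω₀ = -(1 / 2 : ℝ) • Ω₁) (hΩ₁ne : Ω₁ ≠ 0)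
    (hγf : γf = S⁻¹ *ᵥ Ω₀) (hδf : δf = S⁻¹ *ᵥ (Ω₁ - Ω₀)) :
    (∫ ω, ((∑ j, γf j * X ω j) + ∑ j, δf j * X ω j) ^ 2 ∂μ) / π
        + (δf + γf) ⬝ᵥ (S *ᵥ (δf - γf))
      = (1 + 2 * π) * (Ω₁ ⬝ᵥ (S⁻¹ *ᵥ Ω₁)) / π ∧
    0 < (∫ ω, ((∑ j, γf j * X ω j) + ∑ j, δf j * X ω j) ^ 2 ∂μ) / π
        + (δf + γf) ⬝ᵥ (S *ᵥ (δf - γf)) := by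
  have hdet : IsUnit S.det := (isUnit_iff_isUnit_det S).mp hSpd.isUnit
  have hsum : δf + γf = S⁻¹ *ᵥ Ω₁ := by
    rw [hγf, hδf, ← mulVec_add, sub_add_cancel]
  have hdiff : δf - γf = S⁻¹ *ᵥ ((2 : ℝ) • Ω₁) := by
    rw [hγf, hδf, ← mulVec_sub, hrel]
    congr 1
    module
  have hmoment : ∫ ω, ((∑ j, γf j * X ω j) + ∑ j, δf j * X ω j) ^ 2 ∂μ
      = Ω₁ ⬝ᵥ (S⁻¹ *ᵥ Ω₁) := by
    simp_rw [← Finset.sum_add_distrib, ← add_mul, add_comm (γf _)]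
    refine (integral_sq_sum_mul_eq_dotProduct_mulVec hXL2 hS (δf + γf)).trans ?_
    rw [hsum, mulVec_nonsing_inv_mulVec hdet, dotProduct_comm]
  have hcross : (δf + γf) ⬝ᵥ (S *ᵥ (δf - γf)) = 2 * (Ω₁ ⬝ᵥ (S⁻¹ *ᵥ Ω₁)) := by
    rw [hsum, hdiff, mulVec_nonsing_inv_mulVec hdet, dotProduct_comm, smul_dotProduct,
      smul_eq_mul]
  have hQ : 0 < Ω₁ ⬝ᵥ (S⁻¹ *ᵥ Ω₁) := by
    simpa using hSpd.inv.dotProduct_mulVec_pos hΩ₁ne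
  rw [hmoment, hcross]
  exact ⟨by field_simp, by positivity⟩

/-- empirically-centred interaction-only estimator vs ANOVA: with
`Ω₁ = E(XY|A=1)`, `Ω₀ = E(XY|A=0)`, `Ω₀ = -(1/2)Ω₁ ≠ 0`, `δ_f = Σ⁻¹(Ω₁-Ω₀)`,
`γ_f = Σ⁻¹Ω₀` and `δ₁ = δ_f + γ_f`, the difference of corrected asymptotic variances
`Ṽ₁ - Ṽ₂ = E[(γ_fᵀX + δ_fᵀX)²]/π + (δ_f+γ_f)ᵀΣ(δ_f-γ_f)` equals
`(1+2π) Ω₁ᵀΣ⁻¹Ω₁ / π > 0`. -/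
theorem stmt_14 {Ωs : Type*} [MeasurableSpace Ωs] (μ : Measure Ωs) [IsProbabilityMeasure μ]
    {p : ℕ} (π : ℝ) (hπ0 : 0 < π) (hπ1 : π < 1)
    (A Y : Ωs → ℝ) (X : Ωs → Fin p → ℝ)
    (hA01 : ∀ ω, A ω = 0 ∨ A ω = 1)
    (hAmean : ∫ ω, A ω ∂μ = π)
    (hindep : IndepFun A X μ)
    (hXmean : ∀ j, ∫ ω, X ω j ∂μ = 0)
    (hY : MemLp Y 2 μ) (hXL2 : ∀ j, MemLp (fun ω => X ω j) 2 μ)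
    (S : Matrix (Fin p) (Fin p) ℝ)
    (hS : ∀ j k, S j k = ∫ ω, X ω j * X ω k ∂μ) (hSpd : S.PosDef)
    (Ω₁ Ω₀ γf δf δ₁ : Fin p → ℝ)
    (hΩ₁ : ∀ j, Ω₁ j = (∫ ω, X ω j * Y ω * A ω ∂μ) / π)
    (hΩ₀ : ∀ j, Ω₀ j = (∫ ω, X ω j * Y ω * (1 - A ω) ∂μ) / (1 - π))
    (hrel : Ω₀ = -(1 / 2 : ℝ) • Ω₁) (hΩ₁ne : Ω₁ ≠ 0)
    (hγf : γf = S⁻¹ *ᵥ Ω₀) (hδf : δf = S⁻¹ *ᵥ (Ω₁ - Ω₀)) (hδ₁ : δ₁ = δf + γf) :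
    (∫ ω, ((∑ j, γf j * X ω j) + ∑ j, δf j * X ω j) ^ 2 ∂μ) / π
        + (δf + γf) ⬝ᵥ (S *ᵥ (δf - γf))
      = (1 + 2 * π) * (Ω₁ ⬝ᵥ (S⁻¹ *ᵥ Ω₁)) / π ∧
    0 < (∫ ω, ((∑ j, γf j * X ω j) + ∑ j, δf j * X ω j) ^ 2 ∂μ) / π
        + (δf + γf) ⬝ᵥ (S *ᵥ (δf - γf)) :=
  stmt_14_general μ π hπ0 X hXL2 S hS hSpd Ω₁ Ω₀ γf δf hrel hΩ₁ne hγf hδf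
end
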